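/- arXiv:2110.01342 — 4 statements merged into one kernel-verified Lean document; each statement's English description precedes it below -/
import Mathlib

section
/- Let D be a triangulated category and C₁, C₂, C₃ full subcategories of D each containing the zero object. Then the subcategory [[C₁, C₂], C₃] equals [C₁, C₂, C₃] equals [C₁, [C₂, C₃]], where [C₁, ..., Cₙ] denotes the full subcategory of objects E admitting a filtration 0 = E₀ → E₁ → ⋯ → Eₙ = E by exact triangles with successive cones Mᵢ = cone(Eᵢ₋₁ → Eᵢ) lying in Cᵢ. -/
/-!
Statement 0.  Let `D` be a triangulated category and `C₁, C₂, C₃` full subcategories of `D`,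
each containing a zero object (full subcategories of objects, closed under isomorphism).
Then `[[C₁, C₂], C₃] = [C₁, C₂, C₃] = [C₁, [C₂, C₃]]`, where `[C₁, …, Cₙ]` is the full
subcategory of objects `E` admitting a filtration `0 = E₀ → E₁ → ⋯ → Eₙ = E` by distinguished
triangles `Eᵢ₋₁ → Eᵢ → Mᵢ → Eᵢ₋₁[1]` with `Mᵢ ∈ Cᵢ`.
-/

open CategoryTheory Category Limits Pretriangulated

universe v u

variable {D : Type u} [Category.{v} D] [HasZeroObject D] [HasShift D ℤ]
  [Preadditive D] [∀ n : ℤ, (shiftFunctor D n).Additive] [Pretriangulated D]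

/-- The two-step bracket `[C₁, C₂]`: objects `E` fitting in a distinguished triangle
`A → E → B → A[1]` with `A ∈ C₁`, `B ∈ C₂`. -/
def bracket2 (C₁ C₂ : Set D) : Set D :=
  {E : D | ∃ (A : D) (B : D) (f : A ⟶ E) (g : E ⟶ B) (h : B ⟶ A⟦(1 : ℤ)⟧),
    (Triangle.mk f g h ∈ distTriang D) ∧ A ∈ C₁ ∧ B ∈ C₂}

/-- The multi-bracket `[C₁, …, Cₙ]`: objects `E` admitting a filtration
`0 = E₀ → E₁ → ⋯ → Eₙ = E` by distinguished triangles with the `i`-th cone in `Cᵢ`. -/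
def multiBracket (Cs : List (Set D)) : Set D :=
  {E : D | ∃ F : Fin (Cs.length + 1) → D,
    IsZero (F 0) ∧ F (Fin.last _) = E ∧
    ∀ i : Fin Cs.length,
      ∃ (M : D) (f : F i.castSucc ⟶ F i.succ) (g : F i.succ ⟶ M)
        (h : M ⟶ (F i.castSucc)⟦(1 : ℤ)⟧),
        (Triangle.mk f g h ∈ distTriang D) ∧ M ∈ Cs.get i}


open ZeroObject

lemma zero_triangle_dist (X : D) :
    Triangle.mk (0 : (0 : D) ⟶ X) (𝟙 X) (0 : X ⟶ (0 : D)⟦(1 : ℤ)⟧) ∈ distTriang D := by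
  obtain ⟨Z, g, h, hT⟩ := distinguished_cocone_triangle (0 : (0 : D) ⟶ X)
  have hg : IsIso g := (Triangle.isZero₁_iff_isIso₂ _ hT).1 (isZero_zero D)
  refine isomorphic_distinguished _ hT _ ?_
  refine Triangle.isoMk _ _ (Iso.refl _) (Iso.refl _) (@asIso _ _ _ _ g hg) (by exact (comp_id _).trans (id_comp _).symm) (by exact rfl) ?_
  exact ((shiftFunctor D (1 : ℤ)).map_isZero (isZero_zero D)).eq_of_tgt _ _

theorem bracket_assoc [IsTriangulated D] (C₁ C₂ C₃ : Set D)
    (hz₁ : ∃ Z ∈ C₁, IsZero Z) (hz₂ : ∃ Z ∈ C₂, IsZero Z) (hz₃ : ∃ Z ∈ C₃, IsZero Z)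
    (hiso₁ : ∀ {X Y : D}, (X ≅ Y) → X ∈ C₁ → Y ∈ C₁)
    (hiso₂ : ∀ {X Y : D}, (X ≅ Y) → X ∈ C₂ → Y ∈ C₂)
    (hiso₃ : ∀ {X Y : D}, (X ≅ Y) → X ∈ C₃ → Y ∈ C₃) :
    bracket2 (bracket2 C₁ C₂) C₃ = multiBracket [C₁, C₂, C₃] ∧
    multiBracket [C₁, C₂, C₃] = bracket2 C₁ (bracket2 C₂ C₃) := by
  constructor
  · apply Set.Subset.antisymm
    · rintro E ⟨A, B, f, g, h, hT, ⟨A₁, A₂, f', g', h', hT', hA₁, hA₂⟩, hB⟩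
      refine ⟨![0, A₁, A, E], isZero_zero D, rfl, ?_⟩
      intro i
      fin_cases i
      · exact ⟨A₁, 0, 𝟙 A₁, 0, zero_triangle_dist A₁, hA₁⟩
      · exact ⟨A₂, f', g', h', hT', hA₂⟩
      · exact ⟨B, f, g, h, hT, hB⟩
    · rintro E ⟨F, hF0, hFl, htri⟩
      obtain ⟨M₁, f₁, g₁, h₁, ht₁, hM₁⟩ := htri ⟨0, by simp⟩
      obtain ⟨M₂, f₂, g₂, h₂, ht₂, hM₂⟩ := htri ⟨1, by simp⟩
      obtain ⟨M₃, f₃, g₃, h₃, ht₃, hM₃⟩ := htri ⟨2, by simp⟩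
      have hg₁ : IsIso g₁ := (Triangle.isZero₁_iff_isIso₂ _ ht₁).1 hF0
      have hF1 : F 1 ∈ C₁ := hiso₁ (asIso g₁).symm hM₁
      have hF2 : F 2 ∈ bracket2 C₁ C₂ := ⟨F 1, M₂, f₂, g₂, h₂, ht₂, hF1, hM₂⟩
      rw [← hFl]
      exact ⟨F 2, M₃, f₃, g₃, h₃, ht₃, hF2, hM₃⟩
  · apply Set.Subset.antisymm
    · rintro E ⟨F, hF0, hFl, htri⟩
      obtain ⟨M₁, f₁, g₁, h₁, ht₁, hM₁⟩ := htri ⟨0, by simp⟩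
      obtain ⟨M₂, f₂, g₂, h₂, ht₂, hM₂⟩ := htri ⟨1, by simp⟩
      obtain ⟨M₃, f₃, g₃, h₃, ht₃, hM₃⟩ := htri ⟨2, by simp⟩
      have hg₁ : IsIso g₁ := (Triangle.isZero₁_iff_isIso₂ _ ht₁).1 hF0
      have hF1 : F 1 ∈ C₁ := hiso₁ (asIso g₁).symm hM₁
      obtain ⟨W, vW, wW, hW⟩ := distinguished_cocone_triangle (f₂ ≫ f₃)
      have O := Triangulated.someOctahedron rfl ht₂ ht₃ hW
      have hWmem : W ∈ bracket2 C₂ C₃ := ⟨M₂, M₃, O.m₁, O.m₃, _, O.mem, hM₂, hM₃⟩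
      rw [← hFl]
      exact ⟨F 1, W, f₂ ≫ f₃, vW, wW, hW, hF1, hWmem⟩
    · rintro E ⟨A, B, f, g, h, hT, hA, B₂, B₃, p, q, r, hS, hB₂, hB₃⟩
      have hT' : Triangle.mk g h (-f⟦(1 : ℤ)⟧') ∈ distTriang D := rot_of_distTriang _ hT
      have hS' : Triangle.mk q r (-p⟦(1 : ℤ)⟧') ∈ distTriang D := rot_of_distTriang _ hS
      obtain ⟨Z, z₂, z₃, hZ⟩ := distinguished_cocone_triangle (g ≫ q)
      have O := Triangulated.someOctahedron rfl hT' hS' hZ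
      have hsh := Triangle.shift_distinguished _ O.mem (-1)
      set T' := (CategoryTheory.shiftFunctor (Triangle D) (-1 : ℤ)).obj
        (Triangle.mk O.m₁ O.m₃ ((-p⟦(1 : ℤ)⟧') ≫ h⟦(1 : ℤ)⟧')) with hT'def
      let e₁ : (A⟦(1 : ℤ)⟧)⟦(-1 : ℤ)⟧ ≅ A :=
        (shiftFunctorCompIsoId D (1 : ℤ) (-1) (by ring)).app A
      let e₃ : (B₂⟦(1 : ℤ)⟧)⟦(-1 : ℤ)⟧ ≅ B₂ :=
        (shiftFunctorCompIsoId D (1 : ℤ) (-1) (by ring)).app B₂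
      obtain ⟨C', a, b, hC'⟩ := distinguished_cocone_triangle (e₁.inv ≫ T'.mor₁)
      have iso := isoTriangleOfIso₁₂ T' (Triangle.mk (e₁.inv ≫ T'.mor₁) a b) hsh hC'
        e₁ (Iso.refl _) (by exact (comp_id _).trans (e₁.hom_inv_id_assoc _).symm)
      have hC'mem : C' ∈ C₂ := hiso₂ (e₃.symm ≪≫ (Triangle.π₃).mapIso iso) hB₂
      have hIT := inv_rot_of_distTriang _ hZ
      refine ⟨![0, A, Z⟦(-1 : ℤ)⟧, E], isZero_zero D, rfl, ?_⟩
      intro i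
      fin_cases i
      · exact ⟨A, 0, 𝟙 A, 0, zero_triangle_dist A, hA⟩
      · exact ⟨C', e₁.inv ≫ T'.mor₁, a, b, hC', hC'mem⟩
      · exact ⟨B₃, (Triangle.mk (g ≫ q) z₂ z₃).invRotate.mor₁,
          (Triangle.mk (g ≫ q) z₂ z₃).invRotate.mor₂,
          (Triangle.mk (g ≫ q) z₂ z₃).invRotate.mor₃, hIT, hB₃⟩
end

section
/- Let D be a triangulated category and C₁, ..., Cₙ full subcategories of D containing the zero object. Then any way of bracketing C₁, ..., Cₙ in this order using the operation [·,·] yields the same full subcategory, namely [C₁, ..., Cₙ]. -/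
/-!
Statement 1.  Let `D` be a triangulated category and `C₁, …, Cₙ` full subcategories containing
the zero object (closed under isomorphism).  Any bracketing of `C₁, …, Cₙ` in this order using
the two-fold operation `[·,·]` yields the same full subcategory, namely `[C₁, …, Cₙ]`.
-/

open CategoryTheory Category Limits Pretriangulated
open ZeroObject

universe v u

variable {D : Type u} [Category.{v} D] [HasZeroObject D] [HasShift D ℤ]
  [Preadditive D] [∀ n : ℤ, (shiftFunctor D n).Additive] [Pretriangulated D]

/-- A bracketing (binary tree) with leaves labelled by elements of `α`. -/
inductive BTree (α : Type*) : Type _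
  | leaf (a : α) : BTree α
  | node (l r : BTree α) : BTree α

/-- The leaves of a bracketing, in left-to-right order. -/
def BTree.leaves {α : Type*} : BTree α → List α
  | .leaf a => [a]
  | .node l r => l.leaves ++ r.leaves

/-- Evaluation of a bracketing of subcategories using the two-fold bracket `[·,·]`. -/
def BTree.eval : BTree (Set D) → Set D
  | .leaf C => C
  | .node l r => bracket2 l.eval r.eval


lemma exists_dist_of_isos (T : Triangle D) (hT : T ∈ distTriang D) {X Y Z : D}
    (e₁ : X ≅ T.obj₁) (e₂ : Y ≅ T.obj₂) (e₃ : Z ≅ T.obj₃) :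
    ∃ (f : X ⟶ Y) (g : Y ⟶ Z) (h : Z ⟶ X⟦(1:ℤ)⟧), Triangle.mk f g h ∈ distTriang D := by
  refine ⟨e₁.hom ≫ T.mor₁ ≫ e₂.inv, e₂.hom ≫ T.mor₂ ≫ e₃.inv,
    e₃.hom ≫ T.mor₃ ≫ (shiftFunctor D (1:ℤ)).map e₁.inv,
    isomorphic_distinguished _ hT _ ?_⟩
  refine Triangle.isoMk _ _ e₁ e₂ e₃
    (by change (e₁.hom ≫ T.mor₁ ≫ e₂.inv) ≫ e₂.hom = e₁.hom ≫ T.mor₁; simp)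
    (by change (e₂.hom ≫ T.mor₂ ≫ e₃.inv) ≫ e₃.hom = e₂.hom ≫ T.mor₂; simp) ?_
  change (e₃.hom ≫ T.mor₃ ≫ (shiftFunctor D (1:ℤ)).map e₁.inv) ≫ (shiftFunctor D (1:ℤ)).map e₁.hom
    = e₃.hom ≫ T.mor₃
  simp only [assoc, ← Functor.map_comp, Iso.inv_hom_id, Functor.map_id, comp_id]
  simp

/-- Filtration relation: `Filt Cs A E` means `E` admits a filtration starting at `A`
with subquotients in the `Cs`. -/
inductive Filt : List (Set D) → D → D → Prop
  | base {A E : D} (e : A ≅ E) : Filt [] A E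
  | step {C : Set D} {Cs : List (Set D)} {A E₁ E M : D}
      (f : A ⟶ E₁) (g : E₁ ⟶ M) (h : M ⟶ A⟦(1:ℤ)⟧)
      (hT : Triangle.mk f g h ∈ distTriang D) (hM : M ∈ C)
      (hF : Filt Cs E₁ E) : Filt (C :: Cs) A E

lemma Filt.ofIsoLeft {Cs : List (Set D)} {A A' E : D} (h : Filt Cs A E) (e : A' ≅ A) :
    Filt Cs A' E := by
  cases h with
  | base e' => exact .base (e ≪≫ e')
  | step f g h hT hM hF =>
      obtain ⟨f', g', h', hT'⟩ := exists_dist_of_isos _ hT e (Iso.refl _) (Iso.refl _)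
      exact .step f' g' h' hT' hM hF

lemma Filt.ofIsoRight : ∀ {Cs : List (Set D)} {A E : D}, Filt Cs A E →
    ∀ {E' : D}, (E ≅ E') → Filt Cs A E' := by
  intro Cs A E h
  induction h with
  | base e' => intro E' e; exact .base (e' ≪≫ e)
  | step f g h hT hM hF ih => intro E' e; exact .step f g h hT hM (ih e)

lemma Filt.glue : ∀ {L : List (Set D)} {A M : D}, Filt L A M →
    ∀ {R : List (Set D)} {E : D}, Filt R M E → Filt (L ++ R) A E := by
  intro L A M h₁
  induction h₁ with
  | base e => intro R E h₂; exact h₂.ofIsoLeft e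
  | step f g h hT hM hF ih => intro R E h₂; exact .step f g h hT hM (ih h₂)

lemma Filt.split : ∀ (L : List (Set D)) {R : List (Set D)} {A E : D},
    Filt (L ++ R) A E → ∃ M, Filt L A M ∧ Filt R M E := by
  intro L
  induction L with
  | nil => intro R A E h; exact ⟨A, .base (Iso.refl A), h⟩
  | cons C L ih =>
      intro R A E h
      cases h with
      | step f g h' hT hM hF =>
          obtain ⟨M, h₁, h₂⟩ := ih hF
          exact ⟨M, .step f g h' hT hM h₁, h₂⟩

lemma zero_triangle {Z X : D} (hZ : IsZero Z) :
    ∃ (f : Z ⟶ X) (g : X ⟶ X) (h : X ⟶ Z⟦(1:ℤ)⟧), Triangle.mk f g h ∈ distTriang D :=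
  exists_dist_of_isos _ (contractible_distinguished₁ X) hZ.isoZero (Iso.refl _) (Iso.refl _)

/-- Lifting a filtration of the cone `B` of `A ⟶ E` to a filtration of `E` starting at
(an object isomorphic to) `A`. -/
lemma Filt.lift [IsTriangulated D] : ∀ {Cs : List (Set D)} {B₀ B : D}, Filt Cs B₀ B →
    ∀ {A E : D} (f : A ⟶ E) (g : E ⟶ B) (h : B ⟶ A⟦(1:ℤ)⟧)
      (_ : Triangle.mk f g h ∈ distTriang D),
    ∃ (E₀ : D), (∃ (f' : A ⟶ E₀) (g' : E₀ ⟶ B₀) (h' : B₀ ⟶ A⟦(1:ℤ)⟧),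
        Triangle.mk f' g' h' ∈ distTriang D) ∧ Filt Cs E₀ E := by
  intro Cs B₀ B hFilt
  induction hFilt with
  | base e =>
      intro A E f g h hT
      exact ⟨E, exists_dist_of_isos _ hT (Iso.refl _) (Iso.refl _) e, .base (Iso.refl E)⟩
  | @step C Cs B₀ B₁ B M u v w hTuv hM hF ih =>
      intro A E f g h hT
      obtain ⟨E₁, ⟨f₁, g₁, h₁, hT₁⟩, hF₁⟩ := ih f g h hT
      obtain ⟨Y, r, s, hTY⟩ := distinguished_cocone_triangle (g₁ ≫ v)
      have hrot₁ : Triangle.mk g₁ h₁ (-(shiftFunctor D (1:ℤ)).map f₁) ∈ distTriang D :=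
        rot_of_distTriang _ hT₁
      have hrot₂ : Triangle.mk v w (-(shiftFunctor D (1:ℤ)).map u) ∈ distTriang D :=
        rot_of_distTriang _ hTuv
      have oct := Triangulated.someOctahedron rfl hrot₁ hrot₂ hTY
      have hsh := Triangle.shift_distinguished _ oct.mem (-1)
      refine ⟨Y⟦(-1:ℤ)⟧, exists_dist_of_isos _ hsh
        ((shiftFunctorCompIsoId D (1:ℤ) (-1:ℤ) (by ring)).symm.app A) (Iso.refl _)
        ((shiftFunctorCompIsoId D (1:ℤ) (-1:ℤ) (by ring)).symm.app B₀), ?_⟩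
      obtain ⟨f₂, g₂, h₂, hT₂⟩ := exists_dist_of_isos _ (inv_rot_of_distTriang _ hTY)
        (Iso.refl _) (Iso.refl _) (Iso.refl _)
      exact .step f₂ g₂ h₂ hT₂ hM hF₁

/-- The cone of the (composite) map `A ⟶ E` of a filtration is filtered with the
same subquotients, starting from zero. -/
lemma Filt.cone [IsTriangulated D] : ∀ {Cs : List (Set D)} {A E : D}, Filt Cs A E →
    ∃ (f : A ⟶ E) (B : D) (g : E ⟶ B) (h : B ⟶ A⟦(1:ℤ)⟧),
      (Triangle.mk f g h ∈ distTriang D) ∧ ∃ Z, IsZero Z ∧ Filt Cs Z B := by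
  intro Cs A E hFilt
  induction hFilt with
  | @base A E e =>
      obtain ⟨f, g, h, hT⟩ := exists_dist_of_isos (contractibleTriangle A)
        (contractible_distinguished A) (Iso.refl A) e.symm (Iso.refl 0)
      exact ⟨f, 0, g, h, hT, 0, isZero_zero D, .base (Iso.refl 0)⟩
  | @step C Cs A E₁ E M u v w hTuv hM hF ih =>
      obtain ⟨f₁, B₁, g₁, h₁, hT₁, Z, hZ, hFB₁⟩ := ih
      obtain ⟨B, gB, hB, hTB⟩ := distinguished_cocone_triangle (u ≫ f₁)
      have oct := Triangulated.someOctahedron rfl hTuv hT₁ hTB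
      obtain ⟨E₀, ⟨fM, gM, hM', hTM⟩, hFMB⟩ := Filt.lift hFB₁ oct.m₁ oct.m₃ _ oct.mem
      have : IsIso fM := (Triangle.isZero₃_iff_isIso₁ _ hTM).1 hZ
      obtain ⟨f₀, g₀, h₀, hT₀⟩ := zero_triangle (X := M) hZ
      exact ⟨u ≫ f₁, B, gB, hB, hTB, Z, hZ,
        .step f₀ g₀ h₀ hT₀ hM (hFMB.ofIsoLeft (asIso fM))⟩

lemma filt_of_fin : ∀ (Cs : List (Set D)) (F : Fin (Cs.length + 1) → D)
    (_ : ∀ i : Fin Cs.length,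
      ∃ (M : D) (f : F i.castSucc ⟶ F i.succ) (g : F i.succ ⟶ M)
        (h : M ⟶ (F i.castSucc)⟦(1 : ℤ)⟧),
        (Triangle.mk f g h ∈ distTriang D) ∧ M ∈ Cs.get i),
    Filt Cs (F 0) (F (Fin.last _)) := by
  intro Cs
  induction Cs with
  | nil =>
      intro F _
      exact .base (eqToIso (congrArg F (by ext; simp)))
  | cons C Cs ih =>
      intro F hF
      obtain ⟨M, f, g, h, hT, hM⟩ := hF (0 : Fin (Cs.length + 1))
      rw [show (0 : Fin ((C :: Cs).length + 1)) = Fin.castSucc (0 : Fin (Cs.length + 1)) from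
        by ext; simp]
      refine Filt.step f g h hT (by simpa using hM) ?_
      have h2 := ih (fun i => F i.succ) (fun i => by
        simp only [Fin.succ_castSucc]
        exact hF i.succ)
      exact h2.ofIsoRight (eqToIso (congrArg F (by ext; simp)))

lemma fin_of_filt : ∀ {Cs : List (Set D)} {A E : D}, Filt Cs A E →
    ∃ F : Fin (Cs.length + 1) → D,
      Nonempty (F 0 ≅ A) ∧ F (Fin.last _) = E ∧
      ∀ i : Fin Cs.length,
        ∃ (M : D) (f : F i.castSucc ⟶ F i.succ) (g : F i.succ ⟶ M)
          (h : M ⟶ (F i.castSucc)⟦(1 : ℤ)⟧),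
          (Triangle.mk f g h ∈ distTriang D) ∧ M ∈ Cs.get i := by
  intro Cs A E hFilt
  induction hFilt with
  | @base A E e =>
      exact ⟨fun _ => E, ⟨e.symm⟩, rfl, fun i => i.elim0⟩
  | @step C Cs A E₁ E M u v w hTuv hM hF ih =>
      obtain ⟨F', ⟨e'⟩, hlast, htri⟩ := ih
      refine ⟨Fin.cases A F', ⟨eqToIso ?_⟩, ?_, ?_⟩
      · simp
      · rw [show (Fin.last ((C :: Cs).length)) = (Fin.last Cs.length).succ from by ext; simp]
        simp only [Fin.cases_succ]
        exact hlast
      · intro j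
        induction j using Fin.cases with
        | zero =>
            have h₁ : Fin.cases (motive := fun _ => D) A F' (Fin.castSucc 0) = A := by simp
            have h₂ : Fin.cases (motive := fun _ => D) A F' (Fin.succ 0) = F' 0 :=
              Fin.cases_succ _
            obtain ⟨f, g, h, hT⟩ := exists_dist_of_isos _ hTuv
              (eqToIso h₁) (eqToIso h₂ ≪≫ e') (Iso.refl M)
            exact ⟨M, f, g, h, hT, by simpa using hM⟩
        | succ i =>
            simp only [← Fin.succ_castSucc, Fin.cases_succ]
            simpa using htri i

lemma mem_multiBracket_iff {Cs : List (Set D)} {E : D} :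
    E ∈ multiBracket Cs ↔ ∃ Z, IsZero Z ∧ Filt Cs Z E := by
  constructor
  · rintro ⟨F, h0, hlast, htri⟩
    exact ⟨F 0, h0, (filt_of_fin Cs F htri).ofIsoRight (eqToIso hlast)⟩
  · rintro ⟨Z, hZ, hF⟩
    obtain ⟨F, ⟨e⟩, hlast, htri⟩ := fin_of_filt hF
    exact ⟨F, hZ.of_iso e, hlast, htri⟩

lemma bracket2_multiBracket [IsTriangulated D] (L R : List (Set D)) :
    bracket2 (multiBracket L) (multiBracket R) = multiBracket (L ++ R) := by
  ext E
  constructor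
  · rintro ⟨A, B, f, g, h, hT, hA, hB⟩
    rw [mem_multiBracket_iff] at hA hB ⊢
    obtain ⟨Z, hZ, hFA⟩ := hA
    obtain ⟨Z', hZ', hFB⟩ := hB
    obtain ⟨E₀, ⟨f', g', h', hT'⟩, hFE⟩ := hFB.lift f g h hT
    have : IsIso f' := (Triangle.isZero₃_iff_isIso₁ _ hT').1 hZ'
    exact ⟨Z, hZ, (hFA.ofIsoRight (asIso f')).glue hFE⟩
  · intro hE
    rw [mem_multiBracket_iff] at hE
    obtain ⟨Z, hZ, hF⟩ := hE
    obtain ⟨A, hL, hR⟩ := Filt.split L hF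
    obtain ⟨f, B, g, h, hT, Z', hZ', hFB⟩ := hR.cone
    exact ⟨A, B, f, g, h, hT, mem_multiBracket_iff.2 ⟨Z, hZ, hL⟩,
      mem_multiBracket_iff.2 ⟨Z', hZ', hFB⟩⟩

lemma multiBracket_singleton (C : Set D)
    (hiso : ∀ {X Y : D}, (X ≅ Y) → X ∈ C → Y ∈ C) :
    multiBracket [C] = C := by
  ext E
  rw [mem_multiBracket_iff]
  constructor
  · rintro ⟨Z, hZ, hF⟩
    cases hF with
    | step f g h hT hM hF' =>
        cases hF' with
        | base e =>
            have hrot : Triangle.mk g h (-(shiftFunctor D (1:ℤ)).map f) ∈ distTriang D :=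
              rot_of_distTriang _ hT
            have : IsIso g := (Triangle.isZero₃_iff_isIso₁ _ hrot).1
              ((shiftFunctor D (1:ℤ)).map_isZero hZ)
            exact hiso ((asIso g).symm ≪≫ e) hM
  · intro hE
    obtain ⟨f, g, h, hT⟩ := zero_triangle (Z := (0:D)) (X := E) (isZero_zero D)
    exact ⟨0, isZero_zero D, .step f g h hT hE (.base (Iso.refl E))⟩

theorem bracketing_eq_multiBracket [IsTriangulated D] (t : BTree (Set D))
    (hz : ∀ C ∈ t.leaves, ∃ Z ∈ C, IsZero Z)
    (hiso : ∀ C ∈ t.leaves, ∀ {X Y : D}, (X ≅ Y) → X ∈ C → Y ∈ C) :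
    t.eval = multiBracket t.leaves := by
  induction t with
  | leaf C =>
      exact (multiBracket_singleton C (hiso C (by simp [BTree.leaves]))).symm
  | node l r ihl ihr =>
      have hl := ihl (fun C hC => hz C (List.mem_append_left _ hC))
        (fun C hC => hiso C (List.mem_append_left _ hC))
      have hr := ihr (fun C hC => hz C (List.mem_append_right _ hC))
        (fun C hC => hiso C (List.mem_append_right _ hC))
      show bracket2 l.eval r.eval = multiBracket (l.leaves ++ r.leaves)
      rw [hl, hr, bracket2_multiBracket]
end

section
/- Let D be a triangulated category and C₁, ..., Cₙ full subcategories of D, each containing the zero object. If the subcategory [C₁, ..., Cₙ] is closed under extensions in D, then [C₁, ..., Cₙ] equals the extension closure ⟨C₁, ..., Cₙ⟩ of C₁, ..., Cₙ. -/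
/-!
Statement 2.  Let `D` be a triangulated category and `C₁, …, Cₙ` full subcategories of `D`,
each containing the zero object.  If `[C₁, …, Cₙ]` is closed under extensions in `D`, then
`[C₁, …, Cₙ]` equals the extension closure `⟨C₁, …, Cₙ⟩` of `C₁, …, Cₙ`.
-/

open CategoryTheory Category Limits Pretriangulated ZeroObject

universe v u

variable {D : Type u} [Category.{v} D] [HasZeroObject D] [HasShift D ℤ]
  [Preadditive D] [∀ n : ℤ, (shiftFunctor D n).Additive] [Pretriangulated D]

/-- The extension closure `⟨C₁, …, Cₙ⟩`: the smallest class of objects containing every `Cᵢ`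
and closed under extensions, i.e. if `A → E → B → A[1]` is a distinguished triangle with
`A, B` in the class then so is `E`. -/
inductive extClosure (Cs : List (Set D)) : D → Prop
  | of {E : D} {C : Set D} (hC : C ∈ Cs) (hE : E ∈ C) : extClosure Cs E
  | ext {A E B : D} (f : A ⟶ E) (g : E ⟶ B) (h : B ⟶ A⟦(1 : ℤ)⟧)
      (hT : Triangle.mk f g h ∈ distTriang D)
      (hA : extClosure Cs A) (hB : extClosure Cs B) : extClosure Cs E

/-- A triangle `X ≅ Y → 0` is distinguished. -/
lemma dist_iso_zero3 {X Y Z : D} (e : X ≅ Y) (hZ : IsZero Z) :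
    Triangle.mk e.hom (0 : Y ⟶ Z) (0 : Z ⟶ X⟦(1 : ℤ)⟧) ∈ distTriang D := by
  refine isomorphic_distinguished _ (contractible_distinguished X) _ ?_
  exact Triangle.isoMk _ _ (Iso.refl X) e.symm (hZ.isoZero)
    (show e.hom ≫ e.inv = 𝟙 X ≫ 𝟙 X by simp)
    (show (0 : Y ⟶ Z) ≫ hZ.isoZero.hom = e.inv ≫ 0 by simp)
    (show (0 : Z ⟶ X⟦(1 : ℤ)⟧) ≫ (shiftFunctor D (1 : ℤ)).map (𝟙 X) = hZ.isoZero.hom ≫ 0 by simp)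

/-- A triangle `0 → X ≅ Y` is distinguished. -/
lemma dist_zero1 {Z X Y : D} (hZ : IsZero Z) (e : X ≅ Y) :
    Triangle.mk (0 : Z ⟶ X) e.hom (0 : Y ⟶ Z⟦(1 : ℤ)⟧) ∈ distTriang D := by
  have h1 : IsZero ((Z⟦(-1 : ℤ)⟧)) := (shiftFunctor D (-1 : ℤ)).map_isZero hZ
  have h2 : IsZero ((Z⟦(-1 : ℤ)⟧)⟦(1 : ℤ)⟧) := (shiftFunctor D (1 : ℤ)).map_isZero h1
  refine isomorphic_distinguished _
    (inv_rot_of_distTriang _ (dist_iso_zero3 e hZ)) _ ?_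
  exact Triangle.isoMk _ _ (hZ.iso h1) (Iso.refl X) (Iso.refl Y)
    (hZ.eq_of_src _ _) (show e.hom ≫ 𝟙 Y = 𝟙 X ≫ e.hom by simp) (h2.eq_of_tgt _ _)

theorem multiBracket_eq_extClosure [IsTriangulated D] (Cs : List (Set D)) (hne : Cs ≠ [])
    (hz : ∀ C ∈ Cs, ∃ Z ∈ C, IsZero Z)
    (hiso : ∀ C ∈ Cs, ∀ {X Y : D}, (X ≅ Y) → X ∈ C → Y ∈ C)
    (hext : ∀ {A E B : D} (f : A ⟶ E) (g : E ⟶ B) (h : B ⟶ A⟦(1 : ℤ)⟧),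
      (Triangle.mk f g h ∈ distTriang D) →
      A ∈ multiBracket Cs → B ∈ multiBracket Cs → E ∈ multiBracket Cs) :
    multiBracket Cs = {E : D | extClosure Cs E} := by
  -- a zero object belonging to some `C` in `Cs`
  obtain ⟨Z₀, hZ₀C, hZ₀⟩ := hz (Cs.head hne) (List.head_mem hne)
  have hZ₀ext : extClosure Cs Z₀ := extClosure.of (List.head_mem hne) hZ₀C
  -- extClosure contains every zero object
  have hclosZ : ∀ {Y : D}, IsZero Y → extClosure Cs Y := by
    intro Y hY
    exact extClosure.ext _ _ _ (dist_iso_zero3 (hZ₀.iso hY) hZ₀) hZ₀ext hZ₀ext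
  -- extClosure is closed under isomorphism
  have hisoClos : ∀ {X Y : D}, (X ≅ Y) → extClosure Cs X → extClosure Cs Y := by
    intro X Y e hX
    exact extClosure.ext _ _ _ (dist_iso_zero3 e hZ₀) hX hZ₀ext
  apply Set.eq_of_subset_of_subset
  · -- multiBracket ⊆ extClosure
    rintro E ⟨F, hF0, hFlast, hstep⟩
    have key : ∀ i : Fin (Cs.length + 1), extClosure Cs (F i) := by
      intro i
      induction i using Fin.induction with
      | zero => exact hclosZ hF0
      | succ i ih =>
        obtain ⟨M, f, g, h, hT, hM⟩ := hstep i
        exact extClosure.ext f g h hT ih (extClosure.of (Cs.get_mem i) hM)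
    simpa [hFlast] using key (Fin.last _)
  · -- extClosure ⊆ multiBracket
    intro E hE
    induction hE with
    | ext f g h hT _ _ ihA ihB => exact hext f g h hT ihA ihB
    | @of E C hC hEC =>
      obtain ⟨j, hj⟩ := List.get_of_mem hC
      subst hj
      refine ⟨fun i => if (i : ℕ) ≤ (j : ℕ) then (0 : D) else E, ?_, ?_, ?_⟩
      · dsimp only
        rw [if_pos]
        · exact isZero_zero D
        · simp
      · dsimp only
        rw [if_neg]
        simp only [Fin.val_last, not_le]
        exact j.isLt
      · intro i
        dsimp only
        rcases lt_trichotomy (i : ℕ) (j : ℕ) with hlt | heq | hgt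
        · -- both terms zero, cone a zero object of `Cs.get i`
          obtain ⟨Zi, hZiC, hZi⟩ := hz (Cs.get i) (Cs.get_mem i)
          have hc : ((i.castSucc : Fin (Cs.length + 1)) : ℕ) ≤ (j : ℕ) := le_of_lt hlt
          have hs : ((i.succ : Fin (Cs.length + 1)) : ℕ) ≤ (j : ℕ) := by
            simpa using hlt
          rw [if_pos hc, if_pos hs]
          refine ⟨Zi, 0, 0, 0, ?_, hZiC⟩
          have e : (0 : D) ≅ (0 : D) := Iso.refl _
          have h0 : (0 : (0 : D) ⟶ (0 : D)) = e.hom := (isZero_zero D).eq_of_src _ _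
          rw [h0]
          exact dist_iso_zero3 e hZi
        · -- the step where the cone is `E` itself
          have hc : ((i.castSucc : Fin (Cs.length + 1)) : ℕ) ≤ (j : ℕ) := le_of_eq (by simpa using heq)
          have hs : ¬ ((i.succ : Fin (Cs.length + 1)) : ℕ) ≤ (j : ℕ) := by
            simp [Fin.val_succ, heq]
          rw [if_pos hc, if_neg hs]
          have hij : i = j := Fin.ext heq
          subst hij
          exact ⟨E, 0, 𝟙 E, 0, dist_zero1 (isZero_zero D) (Iso.refl E), hEC⟩
        · -- both terms `E`, cone a zero object of `Cs.get i`
          obtain ⟨Zi, hZiC, hZi⟩ := hz (Cs.get i) (Cs.get_mem i)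
          have hc : ¬ ((i.castSucc : Fin (Cs.length + 1)) : ℕ) ≤ (j : ℕ) := by
            simpa using hgt
          have hs : ¬ ((i.succ : Fin (Cs.length + 1)) : ℕ) ≤ (j : ℕ) := by
            simp [Fin.val_succ]; omega
          rw [if_neg hc, if_neg hs]
          exact ⟨Zi, 𝟙 E, 0, 0, dist_iso_zero3 (Iso.refl E) hZi, hZiC⟩
end

section
/- Let A be the heart of a t-structure on a triangulated category D, and suppose A = ⟦C₁, ..., Cₙ⟧ for full subcategories C₁, ..., Cₙ with Hom(Cᵢ, Cⱼ) = 0 for all i < j. Then for any 1 ≤ i ≤ j ≤ n, ⟦Cᵢ, ..., Cⱼ⟧ = ⟦C₁, ..., Cⱼ⟧ ∩ ⟦Cᵢ, ..., Cₙ⟧. -/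
/-!
Statement 3.  Let `A` be the heart of a t-structure on a triangulated category `D`, and suppose
`A = ⟦C₁, …, Cₙ⟧` for full subcategories `C₁, …, Cₙ` with `Hom(Cᵢ, Cⱼ) = 0` for all `i < j`.
Then for any `1 ≤ i ≤ j ≤ n` (here `0`-indexed: `i ≤ j < n`),
`⟦Cᵢ, …, C_j⟧ = ⟦C₁, …, C_j⟧ ∩ ⟦Cᵢ, …, Cₙ⟧`.
-/

open CategoryTheory Category Limits Pretriangulated Triangulated
open ZeroObject

universe v u

variable {D : Type u} [Category.{v} D] [HasZeroObject D] [HasShift D ℤ]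
  [Preadditive D] [∀ n : ℤ, (shiftFunctor D n).Additive] [Pretriangulated D]

/-- The heart of a t-structure `t` on `D`. -/
def TStructure.heartSet (t : TStructure D) : Set D :=
  {X : D | t.le 0 X ∧ t.ge 0 X}

/-- ℕ-indexed reformulation of `multiBracket`. -/
lemma mem_multiBracket_iff_s3 {l : List (Set D)} {E : D} :
    E ∈ multiBracket l ↔ ∃ F : ℕ → D,
      IsZero (F 0) ∧ F l.length = E ∧
      ∀ k, ∀ hk : k < l.length,
        ∃ (M : D) (f : F k ⟶ F (k+1)) (g : F (k+1) ⟶ M) (h : M ⟶ (F k)⟦(1 : ℤ)⟧),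
          (Triangle.mk f g h ∈ distTriang D) ∧ M ∈ l[k] := by
  constructor
  · rintro ⟨F, h0, hlast, htri⟩
    let G : ℕ → D := fun k => if h : k < l.length + 1 then F ⟨k, h⟩ else E
    have hG : ∀ k (h : k < l.length + 1), G k = F ⟨k, h⟩ := fun k h => dif_pos h
    refine ⟨G, ?_, ?_, ?_⟩
    · rw [hG 0 (by omega)]; simpa using h0
    · rw [hG l.length (by omega)]; exact hlast
    · intro k hk
      rw [hG k (by omega), hG (k+1) (by omega)]
      obtain ⟨M, f, g, h, hT, hM⟩ := htri ⟨k, hk⟩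
      exact ⟨M, f, g, h, hT, hM⟩
  · rintro ⟨F, h0, hlast, htri⟩
    refine ⟨fun k => F k.val, by simpa using h0, by simpa using hlast, ?_⟩
    intro i
    obtain ⟨M, f, g, h, hT, hM⟩ := htri i.val i.isLt
    exact ⟨M, f, g, h, hT, hM⟩

lemma multiBracket_nil {E : D} : E ∈ multiBracket ([] : List (Set D)) ↔ IsZero E := by
  rw [mem_multiBracket_iff_s3]
  constructor
  · rintro ⟨F, h0, hlast, -⟩
    simpa [List.length_nil] using hlast ▸ h0
  · intro hE
    exact ⟨fun _ => E, hE, rfl, fun k hk => by simp at hk⟩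

lemma multiBracket_snoc {l : List (Set D)} {C : Set D} {E : D} :
    E ∈ multiBracket (l ++ [C]) ↔
      ∃ (A M : D) (f : A ⟶ E) (g : E ⟶ M) (h : M ⟶ A⟦(1 : ℤ)⟧),
        A ∈ multiBracket l ∧ M ∈ C ∧ Triangle.mk f g h ∈ distTriang D := by
  have hlen : (l ++ [C]).length = l.length + 1 := by simp
  have hgetC : ∀ h : l.length < (l ++ [C]).length, (l ++ [C])[l.length] = C := by
    intro h
    rw [List.getElem_append_right (le_refl l.length)]
    simp
  rw [mem_multiBracket_iff_s3]
  constructor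
  · rintro ⟨F, h0, hlast, htri⟩
    obtain ⟨M, f, g, h, hT, hM⟩ := htri l.length (by omega)
    rw [hlen] at hlast
    subst hlast
    rw [hgetC (by omega)] at hM
    refine ⟨F l.length, M, f, g, h, ?_, hM, hT⟩
    rw [mem_multiBracket_iff_s3]
    refine ⟨F, h0, rfl, fun k hk => ?_⟩
    obtain ⟨M', f', g', h', hT', hM'⟩ := htri k (by omega)
    rw [List.getElem_append_left hk] at hM'
    exact ⟨M', f', g', h', hT', hM'⟩
  · rintro ⟨A, M, f, g, h, hA, hM, hT⟩
    rw [mem_multiBracket_iff_s3] at hA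
    obtain ⟨F, h0, hlast, htri⟩ := hA
    subst hlast
    let G : ℕ → D := fun k => if k < l.length + 1 then F k else E
    have hGlt : ∀ k, k < l.length + 1 → G k = F k := fun k h => if_pos h
    have hGtop : G (l.length + 1) = E := if_neg (by omega)
    refine ⟨G, ?_, ?_, ?_⟩
    · rw [hGlt 0 (by omega)]; exact h0
    · rw [hlen, hGtop]
    · intro k hk
      rw [hlen] at hk
      by_cases hkl : k < l.length
      · rw [hGlt k (by omega), hGlt (k+1) (by omega), List.getElem_append_left hkl]
        obtain ⟨M', f', g', h', hT', hM'⟩ := htri k hkl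
        exact ⟨M', f', g', h', hT', hM'⟩
      · obtain rfl : k = l.length := by omega
        rw [hGlt l.length (by omega), hGtop, hgetC (by omega)]
        exact ⟨M, f, g, h, hT, hM⟩

/-- Auxiliary recursive version of `multiBracket`, with the list reversed:
the head of the list is the *top* cone of the filtration. -/
def mbAux : List (Set D) → Set D
  | [] => {E | IsZero E}
  | C :: m => {E | ∃ (A M : D) (f : A ⟶ E) (g : E ⟶ M) (h : M ⟶ A⟦(1 : ℤ)⟧),
      A ∈ mbAux m ∧ M ∈ C ∧ Triangle.mk f g h ∈ distTriang D}

lemma mbAux_reverse (m : List (Set D)) : mbAux m = multiBracket m.reverse := by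
  induction m with
  | nil => ext E; simp [mbAux, multiBracket_nil]
  | cons C m ih =>
    ext E
    show _ ↔ E ∈ multiBracket (C :: m).reverse
    rw [show (C :: m).reverse = m.reverse ++ [C] by simp, multiBracket_snoc, ← ih]
    rfl

lemma multiBracket_eq_mbAux (l : List (Set D)) : multiBracket l = mbAux l.reverse := by
  rw [mbAux_reverse, List.reverse_reverse]

lemma mbAux_iso {m : List (Set D)} {E E' : D} (e : E ≅ E') (hE : E ∈ mbAux m) :
    E' ∈ mbAux m := by
  cases m with
  | nil => exact hE.of_iso e.symm
  | cons C m =>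
    obtain ⟨A, M, f, g, h, hA, hM, hT⟩ := hE
    refine ⟨A, M, f ≫ e.hom, e.inv ≫ g, h, hA, hM, ?_⟩
    refine isomorphic_distinguished _ hT _ ?_
    exact Triangle.isoMk _ _ (Iso.refl _) e.symm (Iso.refl _)
      (show (f ≫ e.hom) ≫ e.inv = 𝟙 A ≫ f by simp) (show (e.inv ≫ g) ≫ 𝟙 M = e.inv ≫ g by simp)
      (show h ≫ (𝟙 A)⟦(1 : ℤ)⟧' = 𝟙 M ≫ h by simp)

/-- a triangle `E ⟶ E ⟶ Z` with `Z` zero is distinguished -/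
lemma triangle_id_zero_dist {E Z : D} (hZ : IsZero Z) :
    Triangle.mk (𝟙 E) (0 : E ⟶ Z) (0 : Z ⟶ E⟦(1 : ℤ)⟧) ∈ distTriang D := by
  refine isomorphic_distinguished _ (contractible_distinguished E) _ ?_
  exact Triangle.isoMk _ _ (Iso.refl _) (Iso.refl _) (hZ.isoZero)
    (show 𝟙 E ≫ 𝟙 E = 𝟙 E ≫ 𝟙 E by simp)
    (show (0 : E ⟶ Z) ≫ hZ.isoZero.hom = 𝟙 E ≫ (0 : E ⟶ 0) by simp [hZ.eq_of_src 0 0])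
    (show (0 : Z ⟶ E⟦(1 : ℤ)⟧) ≫ (𝟙 E)⟦(1 : ℤ)⟧' = hZ.isoZero.hom ≫ 0 by simp)

lemma mbAux_zero_mem {m : List (Set D)} (hz : ∀ C ∈ m, ∃ Z ∈ C, IsZero Z)
    {E : D} (hE : IsZero E) : E ∈ mbAux m := by
  induction m with
  | nil => exact hE
  | cons C m ih =>
    obtain ⟨Z, hZC, hZ⟩ := hz C (by simp)
    exact ⟨E, Z, 𝟙 E, 0, 0, ih (fun C' hC' => hz C' (by simp [hC'])) ,
      hZC, triangle_id_zero_dist hZ⟩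

/-- absorb zero-containing subcategories below (at the end of the `mbAux` list) -/
lemma mbAux_append_zeros {m m' : List (Set D)} (hz : ∀ C ∈ m', ∃ Z ∈ C, IsZero Z)
    {E : D} (hE : E ∈ mbAux m) : E ∈ mbAux (m ++ m') := by
  induction m generalizing E with
  | nil => exact mbAux_zero_mem hz hE
  | cons C m ih =>
    obtain ⟨A, M, f, g, h, hA, hM, hT⟩ := hE
    exact ⟨A, M, f, g, h, ih hA, hM, hT⟩

/-- absorb zero-containing subcategories above (at the head of the `mbAux` list) -/
lemma mbAux_prepend_zeros {m m' : List (Set D)} (hz : ∀ C ∈ m', ∃ Z ∈ C, IsZero Z)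
    {E : D} (hE : E ∈ mbAux m) : E ∈ mbAux (m' ++ m) := by
  induction m' with
  | nil => exact hE
  | cons C m' ih =>
    obtain ⟨Z, hZC, hZ⟩ := hz C (by simp)
    exact ⟨E, Z, 𝟙 E, 0, 0, ih (fun C' hC' => hz C' (by simp [hC'])),
      hZC, triangle_id_zero_dist hZ⟩

/-- Splitting a filtration: octahedron axiom. -/
lemma mbAux_split [IsTriangulated D] {m₁ m₂ : List (Set D)} {E : D}
    (hE : E ∈ mbAux (m₁ ++ m₂)) :
    ∃ (A B : D) (f : A ⟶ E) (g : E ⟶ B) (h : B ⟶ A⟦(1 : ℤ)⟧),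
      A ∈ mbAux m₂ ∧ B ∈ mbAux m₁ ∧ Triangle.mk f g h ∈ distTriang D := by
  induction m₁ generalizing E with
  | nil =>
    exact ⟨E, 0, 𝟙 E, 0, 0, hE, isZero_zero D, contractible_distinguished E⟩
  | cons C m₁ ih =>
    obtain ⟨P, M, u, v, w, hP, hM, hT⟩ := hE
    obtain ⟨A, B', a, b, c, hA, hB', hT'⟩ := ih hP
    obtain ⟨Z, g', h', hT''⟩ := distinguished_cocone_triangle (a ≫ u)
    have O := Triangulated.someOctahedron rfl hT' hT hT''
    exact ⟨A, Z, a ≫ u, g', h', hA, ⟨B', M, O.m₁, O.m₃, _, hB', hM, O.mem⟩, hT''⟩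

/-- If all pieces have no maps to `X`, neither does a filtered object. -/
lemma mbAux_hom_zero_from {m : List (Set D)} {A : D} (hA : A ∈ mbAux m) {X : D}
    (hz : ∀ C ∈ m, ∀ M ∈ C, ∀ g : M ⟶ X, g = 0) (f : A ⟶ X) : f = 0 := by
  induction m generalizing A with
  | nil => exact hA.eq_of_src f 0
  | cons C m ih =>
    obtain ⟨A', M, a, b, c, hA', hM, hT⟩ := hA
    have h1 : a ≫ f = 0 := ih hA' (fun C' hC' => hz C' (by simp [hC'])) _
    obtain ⟨g, hg⟩ := Triangle.yoneda_exact₂ _ hT f h1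
    rw [hg, hz C (by simp) M hM g]; exact comp_zero

/-- If no piece receives maps from `X`, neither does a filtered object. -/
lemma mbAux_hom_zero_to {m : List (Set D)} {B : D} (hB : B ∈ mbAux m) {X : D}
    (hz : ∀ C ∈ m, ∀ M ∈ C, ∀ g : X ⟶ M, g = 0) (f : X ⟶ B) : f = 0 := by
  induction m generalizing B with
  | nil => exact hB.eq_of_tgt f 0
  | cons C m ih =>
    obtain ⟨A, M, a, b, c, hA, hM, hT⟩ := hB
    have h1 : f ≫ b = 0 := hz C (by simp) M hM _
    obtain ⟨g, hg⟩ := Triangle.coyoneda_exact₂ _ hT f h1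
    rw [hg, ih hA (fun C' hC' => hz C' (by simp [hC'])) g]; exact zero_comp

namespace CategoryTheory.Triangulated.TStructure

variable (t : TStructure D)

lemma zero_of_le_ge {X Y : D} (f : X ⟶ Y) {a b : ℤ} (hX : t.le a X) (hY : t.ge b Y)
    (hab : a < b) : f = 0 := by
  have h1 : t.le 0 (X⟦a⟧) := t.le_shift a a 0 (by omega) X hX
  have h2 : t.ge (b - a) (Y⟦a⟧) := t.ge_shift b a (b - a) (by omega) Y hY
  have h3 : t.ge 1 (Y⟦a⟧) := t.ge_antitone (by omega) _ h2
  have := t.zero' (f⟦a⟧') h1 h3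
  rwa [Functor.map_eq_zero_iff] at this

lemma le_zero_of_isZero {X : D} (hX : IsZero X) (n : ℤ) : t.le n X := by
  obtain ⟨A, B, hA, hB, f, g, h, hT⟩ := t.exists_triangle X n (n + 1) rfl
  have h3 : IsIso h := (Triangle.isZero₂_iff_isIso₃ _ hT).1 hX
  have hBLE : t.le (n - 1) B :=
    (t.le (n - 1)).prop_of_iso (asIso h).symm (t.le_shift n 1 (n - 1) (by omega) A hA)
  have hBz : IsZero B := by
    rw [IsZero.iff_id_eq_zero]
    exact t.zero_of_le_ge _ hBLE hB (by omega)
  have h1 : IsIso f := (Triangle.isZero₃_iff_isIso₁ _ hT).1 hBz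
  exact (t.le n).prop_of_iso (asIso f) hA

lemma ge_zero_of_isZero {X : D} (hX : IsZero X) (n : ℤ) : t.ge n X := by
  obtain ⟨A, B, hA, hB, f, g, h, hT⟩ := t.exists_triangle X (n - 1) n (by omega)
  have h3 : IsIso h := (Triangle.isZero₂_iff_isIso₃ _ hT).1 hX
  have hBLE : t.le (n - 2) B :=
    (t.le (n - 2)).prop_of_iso (asIso h).symm (t.le_shift (n - 1) 1 (n - 2) (by omega) A hA)
  have hBz : IsZero B := by
    rw [IsZero.iff_id_eq_zero]
    exact t.zero_of_le_ge _ hBLE hB (by omega)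
  have hAz : IsZero A := Triangle.isZero₁_of_isZero₂₃ _ hT hX hBz
  have h2 : IsIso g := (Triangle.isZero₁_iff_isIso₂ _ hT).1 hAz
  exact (t.ge n).prop_of_iso (asIso g).symm hB

end CategoryTheory.Triangulated.TStructure

namespace CategoryTheory.Triangulated.TStructure

variable (t : TStructure D)

lemma le_of_orth {X : D} (hX : ∀ Y : D, t.ge 1 Y → ∀ f : X ⟶ Y, f = 0) : t.le 0 X := by
  obtain ⟨A, B, hA, hB, f, g, h, hT⟩ := t.exists_triangle_zero_one X
  obtain ⟨k, hk⟩ := Triangle.yoneda_exact₃ _ hT (𝟙 B)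
    (by rw [show (Triangle.mk f g h).mor₂ = g from rfl, hX B hB g]; exact zero_comp)
  have hk0 : k = 0 := t.zero_of_le_ge k (t.le_shift 0 1 (-1) (by omega) A hA) hB (by omega)
  have hBz : IsZero B := by
    rw [IsZero.iff_id_eq_zero, hk, hk0]; exact comp_zero
  have h1 : IsIso f := (Triangle.isZero₃_iff_isIso₁ _ hT).1 hBz
  exact (t.le 0).prop_of_iso (asIso f) hA

lemma ge_of_orth {X : D} (hX : ∀ Y : D, t.le (-1) Y → ∀ f : Y ⟶ X, f = 0) : t.ge 0 X := by
  obtain ⟨A, B, hA, hB, f, g, h, hT⟩ := t.exists_triangle X (-1) 0 (by omega)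
  obtain ⟨k, hk⟩ := Triangle.coyoneda_exact₁ _ hT (𝟙 (A⟦(1 : ℤ)⟧))
    (show 𝟙 (A⟦(1 : ℤ)⟧) ≫ f⟦(1 : ℤ)⟧' = 0 by rw [id_comp, hX A hA f]; exact Functor.map_zero _ _ _)
  have hk0 : k = 0 := t.zero_of_le_ge k (t.le_shift (-1) 1 (-2) (by omega) A hA) hB (by omega)
  have hAz : IsZero A := by
    rw [IsZero.iff_id_eq_zero, ← Functor.map_eq_zero_iff (shiftFunctor D (1 : ℤ)),
      Functor.map_id, hk, hk0]; exact zero_comp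
  have h2 : IsIso g := (Triangle.isZero₁_iff_isIso₂ _ hT).1 hAz
  exact (t.ge 0).prop_of_iso (asIso g).symm hB

lemma le_of_retract {X E : D} (r : E ⟶ X) (s : X ⟶ E) (hrs : s ≫ r = 𝟙 X)
    (hE : t.le 0 E) : t.le 0 X :=
  t.le_of_orth (fun Y hY f => by
    have h0 : r ≫ f = 0 := t.zero_of_le_ge _ hE hY (by omega)
    rw [← id_comp f, ← hrs, assoc, h0, comp_zero])

lemma ge_of_retract {X E : D} (r : E ⟶ X) (s : X ⟶ E) (hrs : s ≫ r = 𝟙 X)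
    (hE : t.ge 0 E) : t.ge 0 X :=
  t.ge_of_orth (fun Y hY f => by
    have h0 : f ≫ s = 0 := t.zero_of_le_ge _ hY hE (by omega)
    rw [← comp_id f, ← hrs, ← assoc, h0, zero_comp])

lemma le₂ {T : Triangle D} (hT : T ∈ distTriang D) (h₁ : t.le 0 T.obj₁)
    (h₃ : t.le 0 T.obj₃) : t.le 0 T.obj₂ :=
  t.le_of_orth (fun Y hY f => by
    obtain ⟨g, hg⟩ := Triangle.yoneda_exact₂ _ hT f (t.zero' _ h₁ hY)
    rw [hg, t.zero' g h₃ hY, comp_zero])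

lemma ge₂ {T : Triangle D} (hT : T ∈ distTriang D) (h₁ : t.ge 0 T.obj₁)
    (h₃ : t.ge 0 T.obj₃) : t.ge 0 T.obj₂ :=
  t.ge_of_orth (fun Y hY f => by
    obtain ⟨g, hg⟩ := Triangle.coyoneda_exact₂ _ hT f (t.zero_of_le_ge _ hY h₃ (by omega))
    rw [hg, t.zero_of_le_ge g hY h₁ (by omega), zero_comp])

end CategoryTheory.Triangulated.TStructure

lemma mbAux_le (t : TStructure D) {m : List (Set D)}
    (h : ∀ C ∈ m, ∀ M ∈ C, t.le 0 M) {E : D} (hE : E ∈ mbAux m) : t.le 0 E := by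
  induction m generalizing E with
  | nil => exact t.le_zero_of_isZero hE 0
  | cons C m ih =>
    obtain ⟨A, M, f, g, hh, hA, hM, hT⟩ := hE
    exact t.le₂ hT (ih (fun C' hC' => h C' (by simp [hC'])) hA) (h C (by simp) M hM)

lemma mbAux_ge (t : TStructure D) {m : List (Set D)}
    (h : ∀ C ∈ m, ∀ M ∈ C, t.ge 0 M) {E : D} (hE : E ∈ mbAux m) : t.ge 0 E := by
  induction m generalizing E with
  | nil => exact t.ge_zero_of_isZero hE 0
  | cons C m ih =>
    obtain ⟨A, M, f, g, hh, hA, hM, hT⟩ := hE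
    exact t.ge₂ hT (ih (fun C' hC' => h C' (by simp [hC'])) hA) (h C (by simp) M hM)

lemma mbAux_nonempty {m : List (Set D)} {E : D} (hE : E ∈ mbAux m) :
    ∀ C ∈ m, ∃ M, M ∈ C := by
  induction m generalizing E with
  | nil => simp
  | cons C m ih =>
    obtain ⟨A, M, f, g, hh, hA, hM, hT⟩ := hE
    intro C' hC'
    rcases List.mem_cons.1 hC' with rfl | hC'
    · exact ⟨M, hM⟩
    · exact ih hA C' hC'

/-- From nonemptiness, build an object of `mbAux m` of which a given `E ∈ mbAux m₀`
is a retract, for the extended list `m ++ m₀`. -/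
lemma mbAux_retract_absorb {m m₀ : List (Set D)} (hne : ∀ C ∈ m, ∃ M, M ∈ C)
    {E : D} (hE : E ∈ mbAux m₀) :
    ∃ (E' : D) (r : E' ⟶ E) (s : E ⟶ E'), s ≫ r = 𝟙 E ∧ E' ∈ mbAux (m ++ m₀) := by
  induction m with
  | nil => exact ⟨E, 𝟙 E, 𝟙 E, by simp, hE⟩
  | cons C m ih =>
    obtain ⟨E', r, s, hrs, hE'⟩ := ih (fun C' hC' => hne C' (by simp [hC']))
    obtain ⟨M, hM⟩ := hne C (by simp)
    refine ⟨E' ⊞ M, biprod.fst ≫ r, s ≫ biprod.inl, by simp [hrs], ?_⟩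
    exact ⟨E', M, biprod.inl, biprod.snd, 0, hE', hM,
      binaryBiproductTriangle_distinguished E' M⟩

lemma mbAux_exists_mem {m : List (Set D)} (hne : ∀ C ∈ m, ∃ M, M ∈ C) :
    ∃ A, A ∈ mbAux m := by
  obtain ⟨E', r, s, hrs, hE'⟩ := mbAux_retract_absorb (m₀ := []) hne (isZero_zero D)
  rw [List.append_nil] at hE'
  exact ⟨E', hE'⟩


lemma heart_of_mem_multiBracket (t : TStructure D) {Cs : List (Set D)}
    (hheart : TStructure.heartSet t = multiBracket Cs) :
    ∀ C ∈ Cs, ∀ X ∈ C, t.le 0 X ∧ t.ge 0 X := by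
  have h0 : (0 : D) ∈ mbAux Cs.reverse := by
    rw [← multiBracket_eq_mbAux, ← hheart]
    exact ⟨t.le_zero_of_isZero (isZero_zero D) 0, t.ge_zero_of_isZero (isZero_zero D) 0⟩
  have hne : ∀ C ∈ Cs.reverse, ∃ M, M ∈ C := mbAux_nonempty h0
  intro C hC X hX
  obtain ⟨ma, mb, hdec⟩ := List.append_of_mem (List.mem_reverse.2 hC)
  have hne_mb : ∀ C' ∈ mb, ∃ M, M ∈ C' := fun C' hC' => hne C' (by rw [hdec]; simp [hC'])
  have hne_ma : ∀ C' ∈ ma, ∃ M, M ∈ C' := fun C' hC' => hne C' (by rw [hdec]; simp [hC'])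
  obtain ⟨A₀, hA₀⟩ := mbAux_exists_mem hne_mb
  have hE₁ : (A₀ ⊞ X) ∈ mbAux (C :: mb) :=
    ⟨A₀, X, biprod.inl, biprod.snd, 0, hA₀, hX, binaryBiproductTriangle_distinguished A₀ X⟩
  obtain ⟨E', r, s, hrs, hE'⟩ := mbAux_retract_absorb hne_ma hE₁
  have hE'mem : E' ∈ TStructure.heartSet t := by
    rw [hheart, multiBracket_eq_mbAux, hdec]
    exact hE'
  obtain ⟨hLE, hGE⟩ := hE'mem
  have hretr : (biprod.inr ≫ s) ≫ r ≫ biprod.snd = 𝟙 X := by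
    rw [assoc, ← assoc s r, hrs, id_comp, biprod.inr_snd]
  exact ⟨t.le_of_retract (r ≫ biprod.snd) (biprod.inr ≫ s) hretr hLE,
    t.ge_of_retract (r ≫ biprod.snd) (biprod.inr ≫ s) hretr hGE⟩

lemma mbAux_zeros (t : TStructure D) {m : List (Set D)}
    (hh : ∀ C ∈ m, ∀ M ∈ C, t.le 0 M ∧ t.ge 0 M) {E : D} (hE : E ∈ mbAux m)
    (hEz : IsZero E) : ∀ C ∈ m, ∃ Z ∈ C, IsZero Z := by
  induction m generalizing E with
  | nil => simp
  | cons C m ih =>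
    obtain ⟨A, M, f, g, h, hA, hM, hT⟩ := hE
    have hALE : t.le 0 A :=
      mbAux_le t (fun C' hC' M' hM' => (hh C' (by simp [hC']) M' hM').1) hA
    have hIso : IsIso h := (Triangle.isZero₂_iff_isIso₃ _ hT).1 hEz
    have hMLE : t.le (-1) M :=
      (t.le (-1)).prop_of_iso (asIso h).symm (t.le_shift 0 1 (-1) (by omega) A hALE)
    have hMz : IsZero M := by
      rw [IsZero.iff_id_eq_zero]
      exact t.zero_of_le_ge _ hMLE (hh C (by simp) M hM).2 (by omega)
    have hAz : IsZero A := Triangle.isZero₁_of_isZero₂₃ _ hT hEz hMz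
    intro C' hC'
    rcases List.mem_cons.1 hC' with rfl | hC'
    · exact ⟨M, hM, hMz⟩
    · exact ih (fun C'' hC'' M' hM' => hh C'' (by simp [hC'']) M' hM') hA hAz C' hC'

theorem multiBracket_inter [IsTriangulated D] (t : TStructure D) (Cs : List (Set D))
    (hHom : ∀ i j : Fin Cs.length, i < j →
      ∀ X ∈ Cs.get i, ∀ Y ∈ Cs.get j, ∀ f : X ⟶ Y, f = 0)
    (hheart : TStructure.heartSet t = multiBracket Cs)
    (i j : ℕ) (hij : i ≤ j) (hj : j < Cs.length) :
    multiBracket ((Cs.take (j + 1)).drop i) =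
      multiBracket (Cs.take (j + 1)) ∩ multiBracket (Cs.drop i) := by
  classical
  -- Hom-vanishing in `getElem` form
  have hHom' : ∀ (p q : ℕ) (hp : p < Cs.length) (hq : q < Cs.length), p < q →
      ∀ X ∈ Cs[p], ∀ Y ∈ Cs[q], ∀ f : X ⟶ Y, f = 0 := by
    intro p q hp hq hpq X hX Y hY f
    exact hHom ⟨p, hp⟩ ⟨q, hq⟩ hpq X (by simpa [List.get_eq_getElem] using hX)
      Y (by simpa [List.get_eq_getElem] using hY) f
  -- every member of every `C ∈ Cs` lies in the heart
  have hsub : ∀ C ∈ Cs, ∀ X ∈ C, t.le 0 X ∧ t.ge 0 X := heart_of_mem_multiBracket t hheart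
  -- every `C ∈ Cs` contains a zero object
  have hzeros : ∀ C ∈ Cs, ∃ Z ∈ C, IsZero Z := by
    have h0 : (0 : D) ∈ mbAux Cs.reverse := by
      rw [← multiBracket_eq_mbAux, ← hheart]
      exact ⟨t.le_zero_of_isZero (isZero_zero D) 0, t.ge_zero_of_isZero (isZero_zero D) 0⟩
    intro C hC
    exact mbAux_zeros t (fun C' hC' => hsub C' (List.mem_reverse.1 hC')) h0
      (isZero_zero D) C (List.mem_reverse.2 hC)
  -- the three pieces of the list
  set l1 := Cs.take i with hl1
  set l2 := (Cs.take (j + 1)).drop i with hl2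
  set l3 := Cs.drop (j + 1) with hl3
  have h12 : Cs.take (j + 1) = l1 ++ l2 := by
    conv_lhs => rw [← List.take_append_drop i (Cs.take (j + 1))]
    rw [hl1, hl2, List.take_take, min_eq_left (by omega)]
  have h23 : Cs.drop i = l2 ++ l3 := by
    conv_lhs => rw [← List.take_append_drop (j + 1) Cs]
    rw [List.drop_append]
    have h0 : i - (List.take (j + 1) Cs).length = 0 := by
      rw [List.length_take]; omega
    rw [h0, List.drop_zero, hl2, hl3]
  -- memberships
  have hm1 : ∀ C ∈ l1, C ∈ Cs := fun C hC => List.take_subset _ _ hC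
  have hm2 : ∀ C ∈ l2, C ∈ Cs := fun C hC =>
    List.take_subset _ _ (List.drop_subset _ _ hC)
  have hm3 : ∀ C ∈ l3, C ∈ Cs := fun C hC => List.drop_subset _ _ hC
  -- positional information
  have hpos1 : ∀ C ∈ l1, ∃ p, p < i ∧ ∃ hp : p < Cs.length, Cs[p] = C := by
    intro C hC
    obtain ⟨p, hp, hpeq⟩ := List.mem_iff_getElem.1 hC
    have hp' : p < i ∧ p < Cs.length := by
      rw [hl1, List.length_take] at hp; omega
    exact ⟨p, hp'.1, hp'.2, by simpa [hl1, List.getElem_take] using hpeq⟩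
  have hpos2 : ∀ C ∈ l2, ∃ p, i ≤ p ∧ p < j + 1 ∧ ∃ hp : p < Cs.length, Cs[p] = C := by
    intro C hC
    obtain ⟨q, hq, hqeq⟩ := List.mem_iff_getElem.1 hC
    have hq' : i + q < j + 1 ∧ i + q < Cs.length := by
      rw [hl2, List.length_drop, List.length_take] at hq; omega
    refine ⟨i + q, by omega, hq'.1, hq'.2, ?_⟩
    simpa [hl2, List.getElem_drop, List.getElem_take] using hqeq
  have hpos3 : ∀ C ∈ l3, ∃ p, j + 1 ≤ p ∧ ∃ hp : p < Cs.length, Cs[p] = C := by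
    intro C hC
    obtain ⟨q, hq, hqeq⟩ := List.mem_iff_getElem.1 hC
    have hq' : j + 1 + q < Cs.length := by
      rw [hl3, List.length_drop] at hq; omega
    exact ⟨j + 1 + q, by omega, hq', by simpa [hl3, List.getElem_drop] using hqeq⟩
  -- pairwise vanishing
  have h13 : ∀ C ∈ l1, ∀ M ∈ C, ∀ C' ∈ l3, ∀ N ∈ C', ∀ f : M ⟶ N, f = 0 := by
    intro C hC M hM C' hC' N hN f
    obtain ⟨p, hpi, hp, hpeq⟩ := hpos1 C hC
    obtain ⟨q, hqj, hq, hqeq⟩ := hpos3 C' hC'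
    exact hHom' p q hp hq (by omega) M (hpeq ▸ hM) N (hqeq ▸ hN) f
  have h12v : ∀ C ∈ l1, ∀ M ∈ C, ∀ C' ∈ l2, ∀ N ∈ C', ∀ f : M ⟶ N, f = 0 := by
    intro C hC M hM C' hC' N hN f
    obtain ⟨p, hpi, hp, hpeq⟩ := hpos1 C hC
    obtain ⟨q, hqi, hqj, hq, hqeq⟩ := hpos2 C' hC'
    exact hHom' p q hp hq (by omega) M (hpeq ▸ hM) N (hqeq ▸ hN) f
  -- translate to `mbAux`
  have eq2 : multiBracket l2 = mbAux l2.reverse := multiBracket_eq_mbAux l2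
  have eqT : multiBracket (Cs.take (j + 1)) = mbAux (l2.reverse ++ l1.reverse) := by
    rw [h12, multiBracket_eq_mbAux, List.reverse_append]
  have eqD : multiBracket (Cs.drop i) = mbAux (l3.reverse ++ l2.reverse) := by
    rw [h23, multiBracket_eq_mbAux, List.reverse_append]
  ext E
  simp only [Set.mem_inter_iff, eq2, eqT, eqD]
  constructor
  · intro hE
    constructor
    · exact mbAux_append_zeros
        (fun C hC => hzeros C (hm1 C (List.mem_reverse.1 hC))) hE
    · exact mbAux_prepend_zeros
        (fun C hC => hzeros C (hm3 C (List.mem_reverse.1 hC))) hE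
  · rintro ⟨hE1, hE2⟩
    obtain ⟨A, B, fa, fb, fc, hAa, hBb, hT1⟩ := mbAux_split hE1
    obtain ⟨A', B'', ga, gb, gc, hA'b, hB''c, hT2⟩ := mbAux_split hE2
    have h0 : fa ≫ gb = 0 := by
      refine mbAux_hom_zero_from hAa (fun C hC M hM g => ?_) _
      refine mbAux_hom_zero_to hB''c (fun C' hC' N hN g' => ?_) g
      exact h13 C (List.mem_reverse.1 hC) M hM C' (List.mem_reverse.1 hC') N hN g'
    obtain ⟨φ, hφ⟩ := Triangle.coyoneda_exact₂ _ hT2 fa h0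
    have hφ0 : φ = 0 := by
      refine mbAux_hom_zero_from hAa (fun C hC M hM g => ?_) φ
      refine mbAux_hom_zero_to hA'b (fun C' hC' N hN g' => ?_) g
      exact h12v C (List.mem_reverse.1 hC) M hM C' (List.mem_reverse.1 hC') N hN g'
    have hfa : fa = 0 := by rw [hφ, hφ0]; exact zero_comp
    have hALE : t.le 0 A :=
      mbAux_le t (fun C hC M hM => (hsub C (hm1 C (List.mem_reverse.1 hC)) M hM).1) hAa
    have hBGE : t.ge 0 B :=
      mbAux_ge t (fun C hC M hM => (hsub C (hm2 C (List.mem_reverse.1 hC)) M hM).2) hBb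
    obtain ⟨k, hk⟩ := Triangle.coyoneda_exact₁ _ hT1 (𝟙 (A⟦(1 : ℤ)⟧))
      (show 𝟙 (A⟦(1 : ℤ)⟧) ≫ fa⟦(1 : ℤ)⟧' = 0 by rw [id_comp, hfa]; exact Functor.map_zero _ _ _)
    have hk0 : k = 0 :=
      t.zero_of_le_ge k (t.le_shift 0 1 (-1) (by omega) A hALE) hBGE (by omega)
    have hAz : IsZero A := by
      rw [IsZero.iff_id_eq_zero, ← Functor.map_eq_zero_iff (shiftFunctor D (1 : ℤ)),
        CategoryTheory.Functor.map_id, hk, hk0]; exact zero_comp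
    have hIso : IsIso fb := (Triangle.isZero₁_iff_isIso₂ _ hT1).1 hAz
    exact mbAux_iso (asIso fb).symm hBb
end
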